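/- Let W be a kernel (measurable [0,1]² → [−1,1]), P_n a partition of [0,1], and W_{P_n} the projection of W onto P_n (replacing W on each P_i × P_j by its average there). If W_n is any step kernel over P_n, then ‖W − W_{P_n}‖_□ ≤ 2‖W − W_n‖_□, where ‖·‖_□ is the cut norm. -/

import Mathlib

open MeasureTheory

/-- `P` is a partition of `[0,1]` into measurable sets. -/
def IsPartition {n : ℕ} (P : Fin n → Set ℝ) : Prop :=
  (∀ i, MeasurableSet (P i)) ∧ Pairwise (Function.onFun Disjoint P) ∧
    (⋃ i, P i) = Set.Icc 0 1

/-- A step kernel over the partition `P`. -/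
def IsStepKernel {n : ℕ} (P : Fin n → Set ℝ) (V : ℝ → ℝ → ℝ) : Prop :=
  ∃ c : Fin n → Fin n → ℝ, ∀ x y, V x y =
    ∑ i, ∑ j, Set.indicator (P i) (fun _ => (1:ℝ)) x *
      Set.indicator (P j) (fun _ => (1:ℝ)) y * c i j

/-- The cut norm of a two-variable kernel on `[0,1]²`. -/
noncomputable def kernelCutNorm (U : ℝ → ℝ → ℝ) : ℝ :=
  ⨆ S : {S : Set ℝ // MeasurableSet S ∧ S ⊆ Set.Icc 0 1},
    ⨆ T : {T : Set ℝ // MeasurableSet T ∧ T ⊆ Set.Icc 0 1},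
      |∫ x in S.1, ∫ y in T.1, U x y|

/-- The projection (stepping) of `W` onto the partition `P`: on each `P i × P j`
the value is the average of `W` there. -/
noncomputable def kernelProj {n : ℕ} (P : Fin n → Set ℝ) (W : ℝ → ℝ → ℝ) :
    ℝ → ℝ → ℝ := fun x y =>
  ∑ i, ∑ j, Set.indicator (P i) (fun _ => (1:ℝ)) x *
    Set.indicator (P j) (fun _ => (1:ℝ)) y *
      ((∫ u in P i, ∫ v in P j, W u v) /
        ((volume (P i)).toReal * (volume (P j)).toReal))

open Set

section SnoHelpers

lemma sno_intOn' {f : ℝ → ℝ} (hf : Measurable f) {C : ℝ} (h : ∀ x, |f x| ≤ C)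
    {T : Set ℝ} (hT : volume T ≠ ⊤) : IntegrableOn f T := by
  refine Integrable.mono' (g := fun _ => C) ?_ hf.aestronglyMeasurable
    (ae_of_all _ fun x => by simpa [Real.norm_eq_abs] using h x)
  exact integrableOn_const hT

lemma sno_intBound' {f : ℝ → ℝ} {C : ℝ} (h : ∀ x, |f x| ≤ C) {T : Set ℝ}
    (hTm : MeasurableSet T) (hT : volume T ≠ ⊤) :
    |∫ x in T, f x| ≤ C * (volume T).toReal := by
  have := norm_setIntegral_le_of_norm_le_const_ae' (μ := volume) (s := T) (f := f) hT.lt_top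
    (C := C) (ae_of_all _ fun x _ => by rw [Real.norm_eq_abs]; exact h x)
  rw [Real.norm_eq_abs] at this; exact this

lemma sno_vol_Icc_le {T : Set ℝ} (hT : T ⊆ Set.Icc 0 1) :
    (volume T).toReal ≤ 1 ∧ volume T ≠ ⊤ := by
  have h1 : volume T ≤ volume (Set.Icc (0:ℝ) 1) := measure_mono hT
  have h2 : volume (Set.Icc (0:ℝ) 1) = 1 := by simp [Real.volume_Icc]
  rw [h2] at h1
  constructor
  · calc (volume T).toReal ≤ (1 : ENNReal).toReal := ENNReal.toReal_mono (by simp) h1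
    _ = 1 := by simp
  · exact ne_top_of_le_ne_top ENNReal.one_ne_top h1

lemma sno_iter_bound {U : ℝ → ℝ → ℝ} {C : ℝ} (hC : 0 ≤ C) (hU : ∀ x y, |U x y| ≤ C)
    {S T : Set ℝ} (hSm : MeasurableSet S) (hSsub : S ⊆ Set.Icc 0 1)
    (hTm : MeasurableSet T) (hTsub : T ⊆ Set.Icc 0 1) :
    |∫ x in S, ∫ y in T, U x y| ≤ C := by
  obtain ⟨hT1, hTfin⟩ := sno_vol_Icc_le hTsub
  obtain ⟨hS1, hSfin⟩ := sno_vol_Icc_le hSsub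
  have hin : ∀ x, |∫ y in T, U x y| ≤ C := by
    intro x
    calc |∫ y in T, U x y| ≤ C * (volume T).toReal := sno_intBound' (hU x) hTm hTfin
    _ ≤ C * 1 := by nlinarith [ENNReal.toReal_nonneg (a := volume T)]
    _ = C := mul_one C
  calc |∫ x in S, ∫ y in T, U x y| ≤ C * (volume S).toReal := sno_intBound' hin hSm hSfin
  _ ≤ C := by nlinarith [ENNReal.toReal_nonneg (a := volume S)]

instance : Nonempty {S : Set ℝ // MeasurableSet S ∧ S ⊆ Set.Icc 0 1} :=
  ⟨⟨∅, MeasurableSet.empty, empty_subset _⟩⟩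

lemma sno_le_cutNorm {U : ℝ → ℝ → ℝ} {C : ℝ} (hC : 0 ≤ C) (hU : ∀ x y, |U x y| ≤ C)
    {S T : Set ℝ} (hS : MeasurableSet S ∧ S ⊆ Set.Icc 0 1)
    (hT : MeasurableSet T ∧ T ⊆ Set.Icc 0 1) :
    |∫ x in S, ∫ y in T, U x y| ≤ kernelCutNorm U := by
  have hbdd : ∀ S' : {S : Set ℝ // MeasurableSet S ∧ S ⊆ Set.Icc 0 1},
      BddAbove (Set.range fun T' : {T : Set ℝ // MeasurableSet T ∧ T ⊆ Set.Icc 0 1} =>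
        |∫ x in S'.1, ∫ y in T'.1, U x y|) := by
    intro S'
    refine ⟨C, ?_⟩
    rintro _ ⟨T', rfl⟩
    exact sno_iter_bound hC hU S'.2.1 S'.2.2 T'.2.1 T'.2.2
  have hbdd2 : BddAbove (Set.range fun S' : {S : Set ℝ // MeasurableSet S ∧ S ⊆ Set.Icc 0 1} =>
      ⨆ T' : {T : Set ℝ // MeasurableSet T ∧ T ⊆ Set.Icc 0 1},
        |∫ x in S'.1, ∫ y in T'.1, U x y|) := by
    refine ⟨C, ?_⟩
    rintro _ ⟨S', rfl⟩
    exact ciSup_le fun T' => sno_iter_bound hC hU S'.2.1 S'.2.2 T'.2.1 T'.2.2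
  calc |∫ x in S, ∫ y in T, U x y|
      ≤ ⨆ T' : {T : Set ℝ // MeasurableSet T ∧ T ⊆ Set.Icc 0 1},
          |∫ x in S, ∫ y in T'.1, U x y| := le_ciSup (hbdd ⟨S, hS⟩) ⟨T, hT⟩
    _ ≤ kernelCutNorm U := le_ciSup hbdd2 ⟨S, hS⟩

lemma sno_param_meas {U : ℝ → ℝ → ℝ} (hU : Measurable (Function.uncurry U)) (T : Set ℝ) :
    Measurable fun x => ∫ y in T, U x y :=
  (hU.stronglyMeasurable.integral_prod_right' (ν := volume.restrict T)).measurable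

lemma sno_ind_intOn {A T : Set ℝ} (hA : MeasurableSet A) (hT : volume T ≠ ⊤) :
    IntegrableOn (fun y => Set.indicator A (fun _ => (1:ℝ)) y) T :=
  (integrableOn_const hT).indicator hA

lemma sno_ind_int {A T : Set ℝ} (hA : MeasurableSet A) :
    ∫ y in T, Set.indicator A (fun _ => (1:ℝ)) y = (volume (T ∩ A)).toReal := by
  rw [setIntegral_indicator hA]; simp; rfl

lemma sno_int_sum {n : ℕ} {P : Fin n → Set ℝ} (hPm : ∀ i, MeasurableSet (P i))
    (k : Fin n → ℝ) {T : Set ℝ} (hT : volume T ≠ ⊤) :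
    ∫ y in T, (∑ j, Set.indicator (P j) (fun _ => (1:ℝ)) y * k j)
      = ∑ j, (volume (T ∩ P j)).toReal * k j := by
  rw [integral_finset_sum _ (fun j _ => (sno_ind_intOn (hPm j) hT).mul_const (k j))]
  exact Finset.sum_congr rfl fun j _ => by rw [integral_mul_const, sno_ind_int (hPm j)]

lemma sno_sum_intOn {n : ℕ} {P : Fin n → Set ℝ} (hPm : ∀ i, MeasurableSet (P i))
    (k : Fin n → ℝ) {T : Set ℝ} (hT : volume T ≠ ⊤) :
    IntegrableOn (fun y => ∑ j, Set.indicator (P j) (fun _ => (1:ℝ)) y * k j) T :=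
  integrable_finset_sum _ (fun j _ => (sno_ind_intOn (hPm j) hT).mul_const (k j))

lemma sno_union_int {n : ℕ} {P : Fin n → Set ℝ} (hPm : ∀ i, MeasurableSet (P i))
    (hPd : Pairwise (Function.onFun Disjoint P)) (hPfin : ∀ i, volume (P i) ≠ ⊤)
    {U : ℝ → ℝ → ℝ} (hU : Measurable (Function.uncurry U)) {C : ℝ} (hUb : ∀ x y, |U x y| ≤ C)
    (A B : Finset (Fin n)) :
    ∫ x in ⋃ i ∈ A, P i, ∫ y in ⋃ j ∈ B, P j, U x y
      = ∑ i ∈ A, ∑ j ∈ B, ∫ x in P i, ∫ y in P j, U x y := by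
  have hUx : ∀ x, Measurable (U x) := fun x => hU.of_uncurry_left
  have hinner : ∀ x, ∫ y in ⋃ j ∈ B, P j, U x y = ∑ j ∈ B, ∫ y in P j, U x y := fun x =>
    integral_biUnion_finset B (fun j _ => hPm j) (fun i _ j _ hij => hPd hij)
      (fun j _ => sno_intOn' (hUx x) (hUb x) (hPfin j))
  simp_rw [hinner]
  have hgb : ∀ j x, |∫ y in P j, U x y| ≤ C * (volume (P j)).toReal := fun j x =>
    sno_intBound' (hUb x) (hPm j) (hPfin j)
  have hgint : ∀ (j i : Fin n), IntegrableOn (fun x => ∫ y in P j, U x y) (P i) := fun j i =>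
    sno_intOn' (sno_param_meas hU (P j)) (hgb j) (hPfin i)
  rw [integral_finset_sum _ (fun j _ => integrableOn_finset_iUnion.2 fun i _ => hgint j i)]
  rw [Finset.sum_comm]
  refine Finset.sum_congr rfl fun j _ => ?_
  exact integral_biUnion_finset A (fun i _ => hPm i) (fun i _ k _ hik => hPd hik)
    (fun i _ => hgint j i)

lemma sno_vertex {m : ℕ} (g : Fin m → ℝ) (b : Fin m → ℝ) (hb : ∀ j, 0 ≤ b j ∧ b j ≤ 1) :
    ∃ B : Finset (Fin m), |∑ j, b j * g j| ≤ |∑ j ∈ B, g j| := by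
  rcases le_or_gt 0 (∑ j, b j * g j) with h | h
  · refine ⟨Finset.univ.filter (fun j => 0 ≤ g j), ?_⟩
    rw [abs_of_nonneg h]
    have h1 : ∑ j, b j * g j ≤ ∑ j ∈ Finset.univ.filter (fun j => 0 ≤ g j), g j := by
      rw [Finset.sum_filter]
      refine Finset.sum_le_sum fun j _ => ?_
      rcases le_or_gt 0 (g j) with hg | hg
      · simp only [if_pos hg]
        nlinarith [(hb j).1, (hb j).2]
      · simp only [if_neg (not_le.mpr hg)]
        nlinarith [(hb j).1, (hb j).2]
    exact h1.trans (le_abs_self _)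
  · refine ⟨Finset.univ.filter (fun j => g j < 0), ?_⟩
    rw [abs_of_neg h]
    have h1 : ∑ j ∈ Finset.univ.filter (fun j => g j < 0), g j ≤ ∑ j, b j * g j := by
      rw [Finset.sum_filter]
      refine Finset.sum_le_sum fun j _ => ?_
      rcases lt_or_ge (g j) 0 with hg | hg
      · simp only [if_pos hg]
        nlinarith [(hb j).1, (hb j).2]
      · simp only [if_neg (not_lt.mpr hg)]
        nlinarith [(hb j).1, (hb j).2]
    calc -∑ j, b j * g j ≤ -∑ j ∈ Finset.univ.filter (fun j => g j < 0), g j := by linarith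
    _ ≤ |∑ j ∈ Finset.univ.filter (fun j => g j < 0), g j| := neg_le_abs _

lemma sno_vertex2 {m : ℕ} (D : Fin m → Fin m → ℝ) (a b : Fin m → ℝ)
    (ha : ∀ i, 0 ≤ a i ∧ a i ≤ 1) (hb : ∀ j, 0 ≤ b j ∧ b j ≤ 1) :
    ∃ A B : Finset (Fin m), |∑ i, ∑ j, a i * b j * D i j| ≤ |∑ i ∈ A, ∑ j ∈ B, D i j| := by
  have h1 : ∑ i, ∑ j, a i * b j * D i j = ∑ j, b j * (∑ i, a i * D i j) := by
    rw [Finset.sum_comm]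
    refine Finset.sum_congr rfl fun j _ => ?_
    rw [Finset.mul_sum]
    exact Finset.sum_congr rfl fun i _ => by ring
  obtain ⟨B, hB⟩ := sno_vertex (fun j => ∑ i, a i * D i j) b hb
  have h2 : ∑ j ∈ B, ∑ i, a i * D i j = ∑ i, a i * (∑ j ∈ B, D i j) := by
    rw [Finset.sum_comm]
    exact Finset.sum_congr rfl fun i _ => by rw [Finset.mul_sum]
  obtain ⟨A, hA⟩ := sno_vertex (fun i => ∑ j ∈ B, D i j) a ha
  exact ⟨A, B, by rw [h1]; exact hB.trans (by rw [h2]; exact hA)⟩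

lemma sno_decomp {n : ℕ} {P : Fin n → Set ℝ} (hPm : ∀ i, MeasurableSet (P i))
    {W Wn : ℝ → ℝ → ℝ} (hUmeas : Measurable (Function.uncurry (fun x y => W x y - Wn x y)))
    (hUb : ∀ x y, |W x y - Wn x y| ≤ 2)
    (c : Fin n → Fin n → ℝ) (hc : ∀ x y, Wn x y =
      ∑ i, ∑ j, Set.indicator (P i) (fun _ => (1:ℝ)) x *
        Set.indicator (P j) (fun _ => (1:ℝ)) y * c i j)
    {S T : Set ℝ} (hSfin : volume S ≠ ⊤) (hTm : MeasurableSet T) (hTfin : volume T ≠ ⊤) :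
    ∫ x in S, ∫ y in T, (W x y - kernelProj P W x y)
      = (∫ x in S, ∫ y in T, (W x y - Wn x y))
        + ∑ i, ∑ j, (volume (S ∩ P i)).toReal * ((volume (T ∩ P j)).toReal *
            (c i j - (∫ u in P i, ∫ v in P j, W u v) /
              ((volume (P i)).toReal * (volume (P j)).toReal))) := by
  set E : Fin n → Fin n → ℝ := fun i j =>
    c i j - (∫ u in P i, ∫ v in P j, W u v) /
      ((volume (P i)).toReal * (volume (P j)).toReal) with hEdef
  have hpt : ∀ x y, W x y - kernelProj P W x y = (W x y - Wn x y) +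
      ∑ j, Set.indicator (P j) (fun _ => (1:ℝ)) y *
        (∑ i, Set.indicator (P i) (fun _ => (1:ℝ)) x * E i j) := by
    intro x y
    have h1 : Wn x y - kernelProj P W x y =
        ∑ j, Set.indicator (P j) (fun _ => (1:ℝ)) y *
          (∑ i, Set.indicator (P i) (fun _ => (1:ℝ)) x * E i j) := by
      rw [hc x y, kernelProj]
      simp only [Finset.mul_sum]
      conv_rhs => rw [Finset.sum_comm]
      rw [← Finset.sum_sub_distrib]
      refine Finset.sum_congr rfl fun i _ => ?_
      rw [← Finset.sum_sub_distrib]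
      refine Finset.sum_congr rfl fun j _ => ?_
      simp only [hEdef]; ring
    linarith [h1]
  have hUx : ∀ x, Measurable fun y => W x y - Wn x y := fun x => hUmeas.of_uncurry_left
  have hinner : ∀ x, ∫ y in T, (W x y - kernelProj P W x y)
      = (∫ y in T, (W x y - Wn x y)) +
        ∑ i, Set.indicator (P i) (fun _ => (1:ℝ)) x *
          (∑ j, (volume (T ∩ P j)).toReal * E i j) := by
    intro x
    rw [integral_congr_ae (ae_of_all _ (hpt x))]
    rw [integral_add (sno_intOn' (hUx x) (hUb x) hTfin) (sno_sum_intOn hPm _ hTfin)]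
    congr 1
    rw [sno_int_sum hPm _ hTfin]
    simp only [Finset.mul_sum]
    rw [Finset.sum_comm]
    exact Finset.sum_congr rfl fun i _ => Finset.sum_congr rfl fun j _ => by ring
  rw [integral_congr_ae (ae_of_all _ hinner)]
  have hf1 : IntegrableOn (fun x => ∫ y in T, (W x y - Wn x y)) S :=
    sno_intOn' (sno_param_meas hUmeas T)
      (fun x => sno_intBound' (hUb x) hTm hTfin) hSfin
  rw [integral_add hf1 (sno_sum_intOn hPm _ hSfin), sno_int_sum hPm _ hSfin]
  congr 1
  exact Finset.sum_congr rfl fun i _ => by rw [Finset.mul_sum]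

lemma sno_stepcut {n : ℕ} {P : Fin n → Set ℝ} (hPm : ∀ i, MeasurableSet (P i))
    (hPd : Pairwise (Function.onFun Disjoint P)) (hPsub : ∀ i, P i ⊆ Set.Icc 0 1)
    {U : ℝ → ℝ → ℝ} (hUmeas : Measurable (Function.uncurry U)) {C : ℝ} (hC : 0 ≤ C)
    (hUb : ∀ x y, |U x y| ≤ C)
    (E : Fin n → Fin n → ℝ)
    (hE : ∀ i j, (volume (P i)).toReal * ((volume (P j)).toReal * E i j)
        = - ∫ x in P i, ∫ y in P j, U x y)
    {S T : Set ℝ} (hSsub : S ⊆ Set.Icc 0 1) (hTsub : T ⊆ Set.Icc 0 1) :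
    |∑ i, ∑ j, (volume (S ∩ P i)).toReal * ((volume (T ∩ P j)).toReal * E i j)|
      ≤ kernelCutNorm U := by
  have hPfin : ∀ i, volume (P i) ≠ ⊤ := fun i => (sno_vol_Icc_le (hPsub i)).2
  set D : Fin n → Fin n → ℝ := fun i j => - ∫ x in P i, ∫ y in P j, U x y with hDdef
  set a : Fin n → ℝ := fun i => (volume (S ∩ P i)).toReal / (volume (P i)).toReal with hadef
  set b : Fin n → ℝ := fun j => (volume (T ∩ P j)).toReal / (volume (P j)).toReal with hbdef
  have hsub0 : ∀ (X : Set ℝ) (i : Fin n), (volume (P i)).toReal = 0 →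
      (volume (X ∩ P i)).toReal = 0 := by
    intro X i h
    have h0 : volume (P i) = 0 := by
      rcases (ENNReal.toReal_eq_zero_iff _).mp h with h' | h'
      · exact h'
      · exact absurd h' (hPfin i)
    have : volume (X ∩ P i) = 0 := measure_mono_null inter_subset_right h0
    simp [this]
  have hterm : ∀ i j, (volume (S ∩ P i)).toReal * ((volume (T ∩ P j)).toReal * E i j)
      = a i * b j * D i j := by
    intro i j
    rcases eq_or_ne (volume (P i)).toReal 0 with hp | hp
    · simp [hadef, hp, hsub0 S i hp]
    · rcases eq_or_ne (volume (P j)).toReal 0 with hq | hq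
      · simp [hbdef, hq, hsub0 T j hq]
      · have hD : D i j = (volume (P i)).toReal * ((volume (P j)).toReal * E i j) :=
          (hE i j).symm
        have ha' : a i = (volume (S ∩ P i)).toReal / (volume (P i)).toReal := rfl
        have hb' : b j = (volume (T ∩ P j)).toReal / (volume (P j)).toReal := rfl
        rw [hD, ha', hb']
        field_simp
  have ha : ∀ i, 0 ≤ a i ∧ a i ≤ 1 := by
    intro i
    refine ⟨div_nonneg ENNReal.toReal_nonneg ENNReal.toReal_nonneg, ?_⟩
    rcases eq_or_ne (volume (P i)).toReal 0 with hp | hp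
    · simp [hadef, hp, hsub0 S i hp]
    · have hle : (volume (S ∩ P i)).toReal ≤ (volume (P i)).toReal :=
        ENNReal.toReal_mono (hPfin i) (measure_mono inter_subset_right)
      exact div_le_one_of_le₀ hle ENNReal.toReal_nonneg
  have hb : ∀ j, 0 ≤ b j ∧ b j ≤ 1 := by
    intro j
    refine ⟨div_nonneg ENNReal.toReal_nonneg ENNReal.toReal_nonneg, ?_⟩
    rcases eq_or_ne (volume (P j)).toReal 0 with hq | hq
    · simp [hbdef, hq, hsub0 T j hq]
    · have hle : (volume (T ∩ P j)).toReal ≤ (volume (P j)).toReal :=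
        ENNReal.toReal_mono (hPfin j) (measure_mono inter_subset_right)
      exact div_le_one_of_le₀ hle ENNReal.toReal_nonneg
  obtain ⟨A, B, hAB⟩ := sno_vertex2 D a b ha hb
  have hsum : ∑ i, ∑ j, (volume (S ∩ P i)).toReal * ((volume (T ∩ P j)).toReal * E i j)
      = ∑ i, ∑ j, a i * b j * D i j :=
    Finset.sum_congr rfl fun i _ => Finset.sum_congr rfl fun j _ => hterm i j
  have hunion : ∑ i ∈ A, ∑ j ∈ B, D i j
      = - ∫ x in ⋃ i ∈ A, P i, ∫ y in ⋃ j ∈ B, P j, U x y := by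
    rw [sno_union_int hPm hPd hPfin hUmeas hUb A B]
    simp [hDdef, Finset.sum_neg_distrib]
  calc |∑ i, ∑ j, (volume (S ∩ P i)).toReal * ((volume (T ∩ P j)).toReal * E i j)|
      = |∑ i, ∑ j, a i * b j * D i j| := by rw [hsum]
    _ ≤ |∑ i ∈ A, ∑ j ∈ B, D i j| := hAB
    _ = |∫ x in ⋃ i ∈ A, P i, ∫ y in ⋃ j ∈ B, P j, U x y| := by rw [hunion, abs_neg]
    _ ≤ kernelCutNorm U := sno_le_cutNorm hC hUb
        ⟨A.measurableSet_biUnion (fun i _ => hPm i), iUnion₂_subset fun i _ => hPsub i⟩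
        ⟨B.measurableSet_biUnion (fun j _ => hPm j), iUnion₂_subset fun j _ => hPsub j⟩

end SnoHelpers

theorem stepping_is_near_optimal (n : ℕ) (P : Fin n → Set ℝ) (hP : IsPartition P)
    (W : ℝ → ℝ → ℝ) (hWmeas : Measurable (Function.uncurry W))
    (hWb : ∀ x y, W x y ∈ Set.Icc (-1 : ℝ) 1)
    (Wn : ℝ → ℝ → ℝ) (hWn : IsStepKernel P Wn)
    (hWnb : ∀ x y, Wn x y ∈ Set.Icc (-1 : ℝ) 1) :
    kernelCutNorm (fun x y => W x y - kernelProj P W x y) ≤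
      2 * kernelCutNorm (fun x y => W x y - Wn x y) := by
  obtain ⟨hPm, hPd, hPu⟩ := hP
  obtain ⟨c, hc⟩ := hWn
  have hPsub : ∀ i, P i ⊆ Set.Icc 0 1 := fun i => hPu ▸ Set.subset_iUnion P i
  have hPfin : ∀ i, volume (P i) ≠ ⊤ := fun i => (sno_vol_Icc_le (hPsub i)).2
  have hWb1 : ∀ x y, |W x y| ≤ 1 := fun x y => abs_le.mpr ⟨(hWb x y).1, (hWb x y).2⟩
  have hWnb1 : ∀ x y, |Wn x y| ≤ 1 := fun x y => abs_le.mpr ⟨(hWnb x y).1, (hWnb x y).2⟩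
  have hUb : ∀ x y, |W x y - Wn x y| ≤ 2 := by
    intro x y
    calc |W x y - Wn x y| ≤ |W x y| + |Wn x y| := abs_sub _ _
    _ ≤ 2 := by linarith [hWb1 x y, hWnb1 x y]
  have hWnmeas : Measurable (Function.uncurry Wn) := by
    have h : Function.uncurry Wn = fun p : ℝ × ℝ => ∑ i, ∑ j,
        Set.indicator (P i) (fun _ => (1:ℝ)) p.1 *
          Set.indicator (P j) (fun _ => (1:ℝ)) p.2 * c i j :=
      funext fun p => hc p.1 p.2
    rw [h]
    refine Finset.measurable_sum _ fun i _ => Finset.measurable_sum _ fun j _ => ?_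
    exact (((measurable_const.indicator (hPm i)).comp measurable_fst).mul
      ((measurable_const.indicator (hPm j)).comp measurable_snd)).mul_const _
  have hUmeas : Measurable (Function.uncurry (fun x y => W x y - Wn x y)) :=
    hWmeas.sub hWnmeas
  -- the key average identity
  have hDint : ∀ i j, ∫ x in P i, ∫ y in P j, (W x y - Wn x y)
      = (∫ u in P i, ∫ v in P j, W u v)
        - (volume (P i)).toReal * ((volume (P j)).toReal * c i j) := by
    intro i j
    have hWn_y : ∀ x y, Wn x y = ∑ l, Set.indicator (P l) (fun _ => (1:ℝ)) y *
        (∑ k, Set.indicator (P k) (fun _ => (1:ℝ)) x * c k l) := by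
      intro x y
      rw [hc x y]
      simp only [Finset.mul_sum]
      rw [Finset.sum_comm]
      exact Finset.sum_congr rfl fun l _ => Finset.sum_congr rfl fun k _ => by ring
    have hWnint : ∀ x, ∫ y in P j, Wn x y
        = ∑ k, Set.indicator (P k) (fun _ => (1:ℝ)) x * ((volume (P j)).toReal * c k j) := by
      intro x
      rw [integral_congr_ae (ae_of_all _ (hWn_y x))]
      rw [sno_int_sum hPm _ (hPfin j)]
      rw [Finset.sum_eq_single j]
      · rw [Set.inter_self, Finset.mul_sum]
        exact Finset.sum_congr rfl fun k _ => by ring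
      · intro l _ hlj
        have hdisj : Disjoint (P j) (P l) := hPd hlj.symm
        rw [Set.disjoint_iff_inter_eq_empty.mp hdisj]
        simp
      · intro h
        exact absurd (Finset.mem_univ j) h
    have hinner2 : ∀ x, ∫ y in P j, (W x y - Wn x y)
        = (∫ y in P j, W x y)
          - ∑ k, Set.indicator (P k) (fun _ => (1:ℝ)) x * ((volume (P j)).toReal * c k j) := by
      intro x
      rw [integral_sub (sno_intOn' hWmeas.of_uncurry_left (hWb1 x) (hPfin j))
        (sno_intOn' hWnmeas.of_uncurry_left (hWnb1 x) (hPfin j)), hWnint x]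
    rw [integral_congr_ae (ae_of_all _ hinner2)]
    have hf1 : IntegrableOn (fun x => ∫ y in P j, W x y) (P i) :=
      sno_intOn' (sno_param_meas hWmeas (P j))
        (fun x => sno_intBound' (hWb1 x) (hPm j) (hPfin j)) (hPfin i)
    rw [integral_sub hf1 (sno_sum_intOn hPm _ (hPfin i))]
    congr 1
    rw [sno_int_sum hPm _ (hPfin i)]
    rw [Finset.sum_eq_single i]
    · rw [Set.inter_self]
    · intro k _ hki
      have hdisj : Disjoint (P i) (P k) := hPd hki.symm
      rw [Set.disjoint_iff_inter_eq_empty.mp hdisj]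
      simp
    · intro h
      exact absurd (Finset.mem_univ i) h
  have hE : ∀ i j, (volume (P i)).toReal * ((volume (P j)).toReal *
      (c i j - (∫ u in P i, ∫ v in P j, W u v) /
        ((volume (P i)).toReal * (volume (P j)).toReal)))
      = - ∫ x in P i, ∫ y in P j, (W x y - Wn x y) := by
    intro i j
    rcases eq_or_ne (volume (P i)).toReal 0 with hp | hp
    · have h0 : volume (P i) = 0 := by
        rcases (ENNReal.toReal_eq_zero_iff _).mp hp with h' | h'
        · exact h'
        · exact absurd h' (hPfin i)
      have hz : ∫ x in P i, ∫ y in P j, (W x y - Wn x y) = 0 :=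
        setIntegral_measure_zero _ h0
      rw [hz, hp]
      ring
    · rcases eq_or_ne (volume (P j)).toReal 0 with hq | hq
      · have h0 : volume (P j) = 0 := by
          rcases (ENNReal.toReal_eq_zero_iff _).mp hq with h' | h'
          · exact h'
          · exact absurd h' (hPfin j)
        have hz : ∀ x, ∫ y in P j, (W x y - Wn x y) = 0 := fun x =>
          setIntegral_measure_zero _ h0
        rw [hq, integral_congr_ae (ae_of_all _ hz)]
        simp
      · rw [hDint i j]
        field_simp
        ring
  have h0cut : 0 ≤ kernelCutNorm (fun x y => W x y - Wn x y) := by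
    have h := sno_le_cutNorm (by norm_num : (0:ℝ) ≤ 2) hUb
      (S := ∅) (T := ∅) ⟨MeasurableSet.empty, empty_subset _⟩
      ⟨MeasurableSet.empty, empty_subset _⟩
    exact le_trans (abs_nonneg _) h
  have key : ∀ (S T : Set ℝ), MeasurableSet S → S ⊆ Set.Icc 0 1 →
      MeasurableSet T → T ⊆ Set.Icc 0 1 →
      |∫ x in S, ∫ y in T, (W x y - kernelProj P W x y)|
        ≤ 2 * kernelCutNorm (fun x y => W x y - Wn x y) := by
    intro S T hSm hSsub hTm hTsub
    have hSfin := (sno_vol_Icc_le hSsub).2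
    have hTfin := (sno_vol_Icc_le hTsub).2
    rw [sno_decomp hPm hUmeas hUb c hc hSfin hTm hTfin]
    calc |(∫ x in S, ∫ y in T, (W x y - Wn x y))
          + ∑ i, ∑ j, (volume (S ∩ P i)).toReal * ((volume (T ∩ P j)).toReal *
              (c i j - (∫ u in P i, ∫ v in P j, W u v) /
                ((volume (P i)).toReal * (volume (P j)).toReal)))|
        ≤ |∫ x in S, ∫ y in T, (W x y - Wn x y)|
          + |∑ i, ∑ j, (volume (S ∩ P i)).toReal * ((volume (T ∩ P j)).toReal *
              (c i j - (∫ u in P i, ∫ v in P j, W u v) /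
                ((volume (P i)).toReal * (volume (P j)).toReal)))| := abs_add_le _ _
      _ ≤ kernelCutNorm (fun x y => W x y - Wn x y)
          + kernelCutNorm (fun x y => W x y - Wn x y) := by
          refine add_le_add ?_ ?_
          · exact sno_le_cutNorm (by norm_num : (0:ℝ) ≤ 2) hUb ⟨hSm, hSsub⟩ ⟨hTm, hTsub⟩
          · exact sno_stepcut hPm hPd hPsub hUmeas (by norm_num : (0:ℝ) ≤ 2) hUb _ hE
              hSsub hTsub
      _ = 2 * kernelCutNorm (fun x y => W x y - Wn x y) := by ring
  have h2c : (0:ℝ) ≤ 2 * kernelCutNorm (fun x y => W x y - Wn x y) := by linarith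
  unfold kernelCutNorm
  exact Real.iSup_le
    (fun S => Real.iSup_le (fun T => key S.1 T.1 S.2.1 S.2.2 T.2.1 T.2.2) h2c) h2c
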